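/- Let φ ∈ H¹(0,∞) with ∫₀^∞ (φ')² + a² φ² dt = 1 for some a > 0. Then the value of ∫₀^{1/2} φ² dt is at most 1/(κ(a) + a²), where κ(a) is the smallest positive root of √κ tan(√κ/2) = a. -/

import Mathlib

/-!
Put `ω = √κ`. The weight `h t = -ω tan (ω t)` on `[0, 1/2]`, continued by the constant `-a` on
`[1/2, ∞)`, is continuous because `ω tan (ω/2) = a`, and solves the Riccati equation
`h' = -(c + h²)` with `c = κ` on the first piece and `c = -a²` on the second. Completing the square
gives `(h φ²)' ≤ φ'² - c φ²`; integrating over `[ε, T]` and using `h ≤ 0` yields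
`(κ + a²) ∫_ε^{1/2} φ² ≤ ∫_ε^T (φ'² + a² φ²) + a φ(T)²`. Since `φ² ∈ L¹`, `φ(T)²` is small for
some large `T`, and `ε → 0` finishes. Minimality of `κ` gives `ω < π`, so `tan (ω t)` has no pole
on `[0, 1/2]`.
-/

open MeasureTheory Real Set

/-- `κ` is the smallest positive root of `√κ · tan(√κ/2) = a`. -/
def IsSmallestRoot (a κ : ℝ) : Prop :=
  0 < κ ∧ Real.sqrt κ * Real.tan (Real.sqrt κ / 2) = a ∧
    ∀ κ' : ℝ, 0 < κ' → Real.sqrt κ' * Real.tan (Real.sqrt κ' / 2) = a → κ ≤ κ'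

open Filter

theorem exists_mem_Ioo_mul_tan_half_eq {a : ℝ} (ha : 0 < a) :
    ∃ ω ∈ Ioo 0 π, ω * tan (ω / 2) = a := by
  -- at `b = 2 arctan m` one has `b tan (b/2) = b m ≥ (π/2) m ≥ a`
  set m := max a 1
  have hm : arctan 1 ≤ arctan m := arctan_mono (le_max_right a 1)
  have hmπ : arctan m < π / 2 := arctan_lt_pi_div_two m
  rw [arctan_one] at hm
  have hcont : ContinuousOn (fun x => x * tan (x / 2)) (Icc 0 (2 * arctan m)) := by
    refine continuousOn_id.mul (continuousOn_tan_Ioo.comp (by fun_prop) fun x hx => ?_)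
    constructor <;> linarith [hx.1, hx.2, pi_pos]
  have hmem : a ∈ Icc (0 * tan (0 / 2)) (2 * arctan m * tan (2 * arctan m / 2)) := by
    rw [mul_div_cancel_left₀ _ two_ne_zero, tan_arctan]
    constructor
    · simpa using ha.le
    · nlinarith [le_max_left a 1, le_max_right a 1, pi_gt_three]
  obtain ⟨ω, hω, hωa⟩ := intermediate_value_Icc (by linarith [pi_pos]) hcont hmem
  refine ⟨ω, ⟨hω.1.lt_of_ne ?_, by linarith [hω.2]⟩, hωa⟩
  rintro rfl
  simp at hωa
  linarith

theorem sqrt_lt_pi_of_isSmallestRoot {a κ : ℝ} (ha : 0 < a) (hκ : IsSmallestRoot a κ) :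
    √κ < π := by
  obtain ⟨ω, ⟨hω0, hωπ⟩, hωa⟩ := exists_mem_Ioo_mul_tan_half_eq ha
  have hκω : κ ≤ ω ^ 2 := hκ.2.2 _ (by positivity) (by rwa [sqrt_sq hω0.le])
  calc √κ ≤ √(ω ^ 2) := sqrt_le_sqrt hκω
    _ = ω := sqrt_sq hω0.le
    _ < π := hωπ

/-- A solution of the Riccati equation `h' = -(c + h²)` is the weight of a Picone-type
inequality: `(h φ²)' = φ'² - c φ² - (φ' - h φ)²`. -/
theorem mul_sq_sub_le_integral_of_riccati {φ φ' h : ℝ → ℝ} {c x y : ℝ} (hxy : x ≤ y)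
    (hφc : ContinuousOn φ (Icc x y)) (hhc : ContinuousOn h (Icc x y))
    (hφ : ∀ t ∈ Ioo x y, HasDerivAt φ (φ' t) t)
    (hh : ∀ t ∈ Ioo x y, HasDerivAt h (-(c + h t ^ 2)) t)
    (hint : IntegrableOn (fun t => φ' t ^ 2 - c * φ t ^ 2) (Icc x y)) :
    h y * φ y ^ 2 - h x * φ x ^ 2 ≤ ∫ t in x..y, φ' t ^ 2 - c * φ t ^ 2 :=
  intervalIntegral.sub_le_integral_of_hasDeriv_right_of_le hxy (hhc.mul (hφc.pow 2))
    (fun t ht => ((hh t ht).mul ((hφ t ht).pow 2)).hasDerivWithinAt) hint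
    fun t _ => by simp only [Pi.pow_apply, Nat.cast_ofNat, Nat.add_one_sub_one, pow_one]; nlinarith [sq_nonneg (φ' t - h t * φ t)]

theorem mul_sq_sub_mul_sq_le_integral {φ : ℝ → ℝ} {a x y : ℝ} (hxy : x ≤ y)
    (hφ : ∀ t ∈ Icc x y, DifferentiableAt ℝ φ t)
    (hint : IntegrableOn (fun t => deriv φ t ^ 2 + a ^ 2 * φ t ^ 2) (Icc x y)) :
    a * φ x ^ 2 - a * φ y ^ 2 ≤ ∫ t in x..y, deriv φ t ^ 2 + a ^ 2 * φ t ^ 2 := by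
  have key := mul_sq_sub_le_integral_of_riccati (h := fun _ => -a) (c := -a ^ 2) hxy
    (fun t ht => (hφ t ht).continuousAt.continuousWithinAt) continuousOn_const
    (fun t ht => (hφ t (Ioo_subset_Icc_self ht)).hasDerivAt)
    (fun t _ => by simpa using hasDerivAt_const t (-a)) (by simpa using hint)
  simpa [neg_mul, sub_eq_add_neg, add_comm] using key

theorem neg_mul_tan_mul_sq_le_integral {φ : ℝ → ℝ} {ω ε L : ℝ} (hω : 0 ≤ ω) (hε : 0 ≤ ε)
    (hεL : ε ≤ L) (hωL : ω * L < π / 2) (hφ : ∀ t ∈ Icc ε L, DifferentiableAt ℝ φ t)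
    (hint : IntegrableOn (fun t => deriv φ t ^ 2 - ω ^ 2 * φ t ^ 2) (Icc ε L)) :
    -(ω * tan (ω * L)) * φ L ^ 2 ≤ ∫ t in ε..L, deriv φ t ^ 2 - ω ^ 2 * φ t ^ 2 := by
  have hmem : ∀ t ∈ Icc ε L, ω * t ∈ Ico 0 (π / 2) := fun t ht =>
    ⟨by nlinarith [ht.1], by nlinarith [ht.2]⟩
  have hcos : ∀ t ∈ Icc ε L, cos (ω * t) ≠ 0 := fun t ht =>
    (cos_pos_of_mem_Ioo ⟨by linarith [(hmem t ht).1, pi_pos], by linarith [(hmem t ht).2]⟩).ne'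
  have key := mul_sq_sub_le_integral_of_riccati (h := fun t => -(ω * tan (ω * t))) hεL
    (fun t ht => (hφ t ht).continuousAt.continuousWithinAt)
    (fun t ht => (((continuousAt_tan.2 (hcos t ht)).comp (by fun_prop)).const_mul ω).neg
      |>.continuousWithinAt)
    (fun t ht => (hφ t (Ioo_subset_Icc_self ht)).hasDerivAt)
    (fun t ht => ?_) hint
  · have hε0 : 0 ≤ tan (ω * ε) := tan_nonneg_of_nonneg_of_le_pi_div_two (hmem ε ⟨le_rfl, hεL⟩).1
      (hmem ε ⟨le_rfl, hεL⟩).2.le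
    nlinarith [mul_nonneg (mul_nonneg hω hε0) (sq_nonneg (φ ε))]
  · have hc := hcos t (Ioo_subset_Icc_self ht)
    have hlin : HasDerivAt (fun t => ω * t) ω t := by simpa using (hasDerivAt_id t).const_mul ω
    refine (((hasDerivAt_tan hc).comp t hlin).const_mul ω).neg.congr_deriv ?_
    rw [one_div, ← inv_one_add_tan_sq hc, inv_inv]
    ring

theorem mul_integral_sq_le_of_mul_tan_half_eq {φ : ℝ → ℝ} {a ω ε T : ℝ} (hω : 0 ≤ ω)
    (hωπ : ω < π) (hroot : ω * tan (ω / 2) = a) (hε : 0 ≤ ε) (hε2 : ε ≤ 1 / 2) (hT : 1 / 2 ≤ T)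
    (hφ : ∀ t ∈ Icc ε T, DifferentiableAt ℝ φ t)
    (hφ2 : IntegrableOn (fun t => φ t ^ 2) (Icc ε T))
    (hφ'2 : IntegrableOn (fun t => deriv φ t ^ 2) (Icc ε T)) :
    (ω ^ 2 + a ^ 2) * ∫ t in ε..1 / 2, φ t ^ 2 ≤
      (∫ t in ε..T, deriv φ t ^ 2 + a ^ 2 * φ t ^ 2) + a * φ T ^ 2 := by
  have hleft := neg_mul_tan_mul_sq_le_integral hω hε hε2 (by linarith)
    (fun t ht => hφ t ⟨ht.1, ht.2.trans hT⟩)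
    ((hφ'2.sub (hφ2.const_mul _)).mono_set (Icc_subset_Icc_right hT))
  have hright := mul_sq_sub_mul_sq_le_integral (a := a) hT
    (fun t ht => hφ t ⟨hε2.trans ht.1, ht.2⟩)
    ((hφ'2.add (hφ2.const_mul _)).mono_set (Icc_subset_Icc_left hε2))
  rw [show ω * (1 / 2) = ω / 2 by ring, hroot] at hleft
  have hinterval : ∀ {f : ℝ → ℝ} {x y}, IntegrableOn f (Icc ε T) → ε ≤ x → x ≤ y → y ≤ T →
      IntervalIntegrable f volume x y := fun hf hx hxy hy =>
    (intervalIntegrable_iff_integrableOn_Icc_of_le hxy).2 (hf.mono_set (Icc_subset_Icc hx hy))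
  have hX : IntegrableOn (fun t => deriv φ t ^ 2 + a ^ 2 * φ t ^ 2) (Icc ε T) :=
    hφ'2.add (hφ2.const_mul _)
  have hsplit : ∫ t in ε..1 / 2, deriv φ t ^ 2 - ω ^ 2 * φ t ^ 2 =
      (∫ t in ε..1 / 2, deriv φ t ^ 2 + a ^ 2 * φ t ^ 2) -
        (ω ^ 2 + a ^ 2) * ∫ t in ε..1 / 2, φ t ^ 2 := by
    rw [← intervalIntegral.integral_const_mul, ← intervalIntegral.integral_sub
      (hinterval hX le_rfl hε2 hT) (hinterval (hφ2.const_mul _) le_rfl hε2 hT)]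
    congr 1
    ext t
    ring
  have hadd := intervalIntegral.integral_add_adjacent_intervals (hinterval hX le_rfl hε2 hT)
    (hinterval hX hε2 hT le_rfl)
  linarith

theorem frequently_lt_of_integrableOn_Ioi {f : ℝ → ℝ} {c δ : ℝ} (hf : IntegrableOn f (Ioi c))
    (hδ : 0 < δ) : ∃ᶠ t in atTop, f t < δ := by
  intro hev
  obtain ⟨N, hN⟩ := eventually_atTop.1 hev
  have hconst : IntegrableOn (fun _ => δ) (Ioi (max N c)) := by
    refine (hf.mono_set (Ioi_subset_Ioi (le_max_right N c))).mono' aestronglyMeasurable_const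
      ((ae_restrict_iff' measurableSet_Ioi).2 (ae_of_all _ fun t ht => ?_))
    rw [norm_of_nonneg hδ.le]
    exact not_lt.1 (hN t (le_max_left N c |>.trans ht.le))
  rw [integrableOn_const_iff] at hconst
  simp [hδ.ne'] at hconst

theorem intervalIntegral_le_of_forall_mem_Ioo {f : ℝ → ℝ} {a b C : ℝ} (hab : a < b)
    (hf : IntegrableOn f (Icc a b)) (h : ∀ x ∈ Ioo a b, ∫ t in x..b, f t ≤ C) :
    ∫ t in a..b, f t ≤ C := by
  have hcont := intervalIntegral.continuousOn_primitive_interval_left (by rwa [uIcc_of_le hab.le])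
  rw [uIcc_of_le hab.le] at hcont
  refine ContinuousWithinAt.closure_le (f := fun x => ∫ t in x..b, f t) (g := fun _ => C) ?_
    ((hcont a (left_mem_Icc.2 hab.le)).mono Ioo_subset_Icc_self) continuousWithinAt_const h
  rw [closure_Ioo hab.ne]
  exact left_mem_Icc.2 hab.le

theorem intervalIntegral_le_integral_Ioi {f : ℝ → ℝ} {c x y : ℝ} (hcx : c ≤ x) (hxy : x ≤ y)
    (hf : IntegrableOn f (Ioi c)) (hf0 : ∀ t ∈ Ioi c, 0 ≤ f t) :
    ∫ t in x..y, f t ≤ ∫ t in Ioi c, f t := by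
  rw [intervalIntegral.integral_of_le hxy]
  exact setIntegral_mono_set hf ((ae_restrict_iff' measurableSet_Ioi).2 (ae_of_all _ hf0))
    (Ioc_subset_Ioi_self.trans (Ioi_subset_Ioi hcx)).eventuallyLE

/-- If `φ ∈ H¹(0,∞)` has energy `∫₀^∞ (φ')² + a²φ² = 1`, then
`∫₀^{1/2} φ² ≤ 1/(κ(a) + a²)`. -/
theorem stmt3 (a κ : ℝ) (ha : 0 < a) (hκ : IsSmallestRoot a κ)
    (φ : ℝ → ℝ) (hdiff : ∀ t ∈ Ioi (0:ℝ), DifferentiableAt ℝ φ t)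
    (hφ2 : IntegrableOn (fun t => φ t ^ 2) (Ioi 0))
    (hφ'2 : IntegrableOn (fun t => deriv φ t ^ 2) (Ioi 0))
    (hnorm : (∫ t in Ioi (0:ℝ), (deriv φ t ^ 2 + a ^ 2 * φ t ^ 2)) = 1) :
    (∫ t in Ioo (0:ℝ) (1/2), φ t ^ 2) ≤ 1 / (κ + a ^ 2) := by
  have hωπ := sqrt_lt_pi_of_isSmallestRoot ha hκ
  obtain ⟨hκ0, hroot, -⟩ := hκ
  have hbound : ∀ ε ∈ Ioo (0:ℝ) (1 / 2), (κ + a ^ 2) * ∫ t in ε..1 / 2, φ t ^ 2 ≤ 1 := by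
    intro ε hε
    refine le_of_forall_pos_le_add fun δ hδ => ?_
    obtain ⟨T, hTδ, hT⟩ := ((frequently_lt_of_integrableOn_Ioi (hφ2.const_mul a) hδ).and_eventually
      (eventually_ge_atTop (1 / 2))).exists
    have hsub : Icc ε T ⊆ Ioi 0 := fun t ht => hε.1.trans_le ht.1
    have hmain := mul_integral_sq_le_of_mul_tan_half_eq (sqrt_nonneg κ) hωπ hroot hε.1.le hε.2.le
      hT (fun t ht => hdiff t (hsub ht)) (hφ2.mono_set hsub) (hφ'2.mono_set hsub)
    have henergy := intervalIntegral_le_integral_Ioi (f := fun t => deriv φ t ^ 2 + a ^ 2 * φ t ^ 2)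
      hε.1.le (hε.2.le.trans hT) (hφ'2.add (hφ2.const_mul _)) fun t _ => by positivity
    rw [sq_sqrt hκ0.le] at hmain
    linarith
  rw [← integral_Ioc_eq_integral_Ioo, ← intervalIntegral.integral_of_le (by norm_num)]
  refine intervalIntegral_le_of_forall_mem_Ioo (by norm_num) ?_ fun ε hε => ?_
  · rw [integrableOn_Icc_iff_integrableOn_Ioc]
    exact hφ2.mono_set Ioc_subset_Ioi_self
  rw [le_div_iff₀ (by positivity), mul_comm]
  exact hbound ε hε
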